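/- arXiv:2503.08914 — 3 statements merged into one kernel-verified Lean document; each statement's English description precedes it below -/
import Mathlib

section
/- Fault Tolerance: if invariant I2 holds (the sum of the t highest weights is less than CT = half the total weight), then for every subset S of nodes with |S| = n−t, the total weight of S exceeds CT; hence any t node failures leave a valid weighted quorum among surviving nodes. -/
lemma top_t_max (n t : ℕ) (w : Fin n → ℝ)
    (hsort : ∀ i j : Fin n, i ≤ j → w j ≤ w i)
    (ht : t ≤ n) (T : Finset (Fin n)) (hT : T.card = t) :
    (∑ i ∈ T, w i) ≤ ∑ i ∈ Finset.univ.filter (fun i : Fin n => (i : ℕ) < t), w i := by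
  set e := T.orderEmbOfFin hT with he
  have hmono : StrictMono e := e.strictMono
  have hle : ∀ k : Fin t, (k : ℕ) ≤ ((e k : Fin n) : ℕ) := by
    have key : ∀ m : ℕ, ∀ k : Fin t, (k : ℕ) = m → m ≤ ((e k : Fin n) : ℕ) := by
      intro m
      induction m with
      | zero => intro k _; exact Nat.zero_le _
      | succ m ih =>
        intro k hk
        have hm : m < t := by omega
        have hlt : (⟨m, hm⟩ : Fin t) < k := by
          simp [Fin.lt_def, hk]
        have h1 := hmono hlt
        have h2 := ih ⟨m, hm⟩ rfl
        have : ((e ⟨m, hm⟩ : Fin n) : ℕ) < ((e k : Fin n) : ℕ) := h1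
        omega
    intro k; exact key k k rfl
  have h1 : (∑ i ∈ T, w i) = ∑ k : Fin t, w (e k) := by
    refine (Finset.sum_bij (fun (k : Fin t) _ => e k) ?_ ?_ ?_ ?_).symm
    · intro k _; exact T.orderEmbOfFin_mem hT k
    · intro a _ b _ h; exact hmono.injective h
    · intro i hi
      have : i ∈ Set.range e := by
        rw [he, Finset.range_orderEmbOfFin]; exact hi
      obtain ⟨k, hk⟩ := this
      exact ⟨k, Finset.mem_univ _, hk⟩
    · intro k _; rfl
  have h2 : (∑ i ∈ Finset.univ.filter (fun i : Fin n => (i : ℕ) < t), w i)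
      = ∑ k : Fin t, w ⟨k, lt_of_lt_of_le k.2 ht⟩ := by
    refine (Finset.sum_bij (fun (k : Fin t) _ => (⟨k, lt_of_lt_of_le k.2 ht⟩ : Fin n)) ?_ ?_ ?_ ?_).symm
    · intro k _; simp
    · intro a _ b _ h
      exact Fin.ext (by simpa [Fin.ext_iff] using h)
    · intro i hi
      simp only [Finset.mem_filter] at hi
      exact ⟨⟨i, hi.2⟩, Finset.mem_univ _, rfl⟩
    · intro k _; rfl
  rw [h1, h2]
  apply Finset.sum_le_sum
  intro k _
  exact hsort _ _ (by simp [Fin.le_def, hle k])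

/-- Fault tolerance: under invariant I2 (the sum of the `t` highest weights is less than
`CT = (total weight)/2`), every subset of `n - t` nodes has total weight exceeding `CT`. -/
theorem stmt_3 (n t : ℕ) (w : Fin n → ℝ)
    (hnn : ∀ i, 0 ≤ w i)
    (hsort : ∀ i j : Fin n, i ≤ j → w j ≤ w i)
    (hn : t + 1 ≤ n)
    (hI2 : (∑ i ∈ Finset.univ.filter (fun i : Fin n => (i : ℕ) < t), w i)
            < (∑ i, w i) / 2) :
    ∀ S : Finset (Fin n), S.card = n - t →
      (∑ i ∈ S, w i) > (∑ i, w i) / 2 := by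
  intro S hS
  have ht : t ≤ n := le_trans (Nat.le_succ t) hn
  have hcompl : Sᶜ.card = t := by
    rw [Finset.card_compl, hS]
    simp [Fintype.card_fin]
    omega
  have hle := top_t_max n t w hsort ht Sᶜ hcompl
  have hsplit : (∑ i ∈ S, w i) + (∑ i ∈ Sᶜ, w i) = ∑ i, w i := by
    rw [Finset.sum_add_sum_compl]
  have : (∑ i ∈ Sᶜ, w i) < (∑ i, w i) / 2 := lt_of_le_of_lt hle hI2
  linarith
end

section
/- If weights satisfy invariant I1 (the top t+1 weights sum to more than CT), then the cabinet (top t+1 nodes) is a quorum of minimum cardinality: it is a quorum, and no set of at most t nodes is a quorum (assuming I2). -/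
private lemma aux_le_apply {m n : ℕ} (f : Fin m → Fin n) (hf : StrictMono f)
    (k : Fin m) : (k : ℕ) ≤ (f k : ℕ) := by
  obtain ⟨k, hk⟩ := k
  induction k with
  | zero => exact Nat.zero_le _
  | succ k ih =>
    have hk' : k < m := Nat.lt_of_succ_lt hk
    have h1 := ih hk'
    have h2 : f ⟨k, hk'⟩ < f ⟨k + 1, hk⟩ := hf (by simp [Fin.lt_iff_val_lt_val])
    have h3 : (f ⟨k, hk'⟩ : ℕ) < (f ⟨k + 1, hk⟩ : ℕ) := h2
    simpa using Nat.lt_of_le_of_lt h1 h3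

/-- Under invariants I1 and I2, the cabinet (the top `t+1` nodes) is a weighted quorum,
and every weighted quorum has cardinality at least `t+1`. -/
theorem stmt_8 (n t : ℕ) (w : Fin n → ℝ)
    (hnn : ∀ i, 0 ≤ w i)
    (hsort : ∀ i j : Fin n, i ≤ j → w j ≤ w i)
    (hI1 : (∑ i ∈ Finset.univ.filter (fun i : Fin n => (i : ℕ) < t + 1), w i)
            > (∑ i, w i) / 2)
    (hI2 : (∑ i ∈ Finset.univ.filter (fun i : Fin n => (i : ℕ) < t), w i)
            < (∑ i, w i) / 2) :
    ((∑ i ∈ Finset.univ.filter (fun i : Fin n => (i : ℕ) < t + 1), w i)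
        > (∑ i, w i) / 2)
    ∧ ∀ S : Finset (Fin n), (∑ i ∈ S, w i) > (∑ i, w i) / 2 → t + 1 ≤ S.card := by
  refine ⟨hI1, ?_⟩
  intro S hS
  by_contra hlt
  push_neg at hlt
  have hcard : S.card ≤ t := Nat.lt_succ_iff.mp hlt
  have hcn : S.card ≤ n := le_trans (Finset.card_le_card (Finset.subset_univ S))
    (by simp [Finset.card_univ])
  -- sum over S ≤ sum over first S.card indices
  set m := S.card with hm
  let σ := S.orderIsoOfFin hm.symm
  have h1 : (∑ i ∈ S, w i) = ∑ k : Fin m, w (σ k) := by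
    rw [← Finset.sum_attach S w]
    exact (Equiv.sum_comp σ.toEquiv (fun i : {x // x ∈ S} => w i.1)).symm
  have hle : ∀ k : Fin m, (Fin.castLE hcn k : Fin n) ≤ σ k := by
    intro k
    exact aux_le_apply (fun k => (σ k : Fin n)) (fun a b hab => σ.strictMono hab) k
  have h2 : (∑ k : Fin m, w (σ k)) ≤ ∑ k : Fin m, w (Fin.castLE hcn k) :=
    Finset.sum_le_sum (fun k _ => hsort _ _ (hle k))
  have h3 : (∑ k : Fin m, w (Fin.castLE hcn k))
      = ∑ i ∈ Finset.univ.filter (fun i : Fin n => (i : ℕ) < m), w i := by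
    have hset : Finset.univ.filter (fun i : Fin n => (i : ℕ) < m)
        = Finset.univ.map (Fin.castLEEmb hcn) := by
      ext i
      simp only [Finset.mem_filter, Finset.mem_univ, true_and, Finset.mem_map,
        Fin.castLEEmb_apply]
      constructor
      · intro hi; exact ⟨⟨i, hi⟩, rfl⟩
      · rintro ⟨k, rfl⟩; exact k.2
    rw [hset, Finset.sum_map]
    rfl
  have h4 : (∑ i ∈ Finset.univ.filter (fun i : Fin n => (i : ℕ) < m), w i)
      ≤ ∑ i ∈ Finset.univ.filter (fun i : Fin n => (i : ℕ) < t), w i := by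
    refine Finset.sum_le_sum_of_subset_of_nonneg ?_ (fun i _ _ => hnn i)
    intro i hi
    simp only [Finset.mem_filter, Finset.mem_univ, true_and] at hi ⊢
    exact lt_of_lt_of_le hi hcard
  linarith [h1 ▸ hS, h2, h3 ▸ h2, h4]
end

section
/- Invariant I2 implies availability after losing any t nodes, i.e., the complement of any t-subset is a quorum; furthermore this bound is tight: under I1, removing the top t+1 nodes leaves a non-quorum. Hence the minimum number of failures that can block consensus is exactly t+1. -/
lemma card_filter_lt_fin (n k : ℕ) (hk : k ≤ n) :
    (Finset.univ.filter (fun i : Fin n => (i : ℕ) < k)).card = k := by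
  have : (Finset.univ.filter (fun i : Fin n => (i : ℕ) < k))
      = (Finset.range k).attachFin
        (fun m hm => lt_of_lt_of_le (Finset.mem_range.mp hm) hk) := by
    ext i
    simp [Finset.mem_attachFin]
  rw [this, Finset.card_attachFin, Finset.card_range]

/-- (a) Under I2, the survivors of any at-most-`t` failures form a weighted quorum;
(b) under I1, there is a set of `t+1` failures (the cabinet) whose survivors do not;
hence the minimum number of failures that can block consensus is exactly `t+1`. -/
theorem stmt_19 (n t : ℕ) (w : Fin n → ℝ)
    (hnn : ∀ i, 0 ≤ w i)
    (hsort : ∀ i j : Fin n, i ≤ j → w j ≤ w i)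
    (hn : t + 1 ≤ n)
    (hI1 : (∑ i ∈ Finset.univ.filter (fun i : Fin n => (i : ℕ) < t + 1), w i)
            > (∑ i, w i) / 2)
    (hI2 : (∑ i ∈ Finset.univ.filter (fun i : Fin n => (i : ℕ) < t), w i)
            < (∑ i, w i) / 2) :
    (∀ F : Finset (Fin n), F.card ≤ t → (∑ i ∈ Fᶜ, w i) > (∑ i, w i) / 2)
    ∧ ∃ F : Finset (Fin n), F.card = t + 1 ∧ (∑ i ∈ Fᶜ, w i) < (∑ i, w i) / 2 := by
  have htn : t < n := hn
  set T : Finset (Fin n) := Finset.univ.filter (fun i : Fin n => (i : ℕ) < t) with hT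
  have hTcard : T.card = t := card_filter_lt_fin n t (le_of_lt htn)
  constructor
  · intro F hF
    -- key: ∑ F ≤ ∑ T
    set c : ℝ := w ⟨t, htn⟩ with hc
    have h1 : ∀ i ∈ F \ T, w i ≤ c := by
      intro i hi
      have : ¬ ((i : ℕ) < t) := by
        have := (Finset.mem_sdiff.mp hi).2
        simpa [hT] using this
      have hti : t ≤ (i : ℕ) := by omega
      exact hsort ⟨t, htn⟩ i (by simpa [Fin.le_def] using hti)
    have h2 : ∀ i ∈ T \ F, c ≤ w i := by
      intro i hi
      have hi' : (i : ℕ) < t := by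
        have := (Finset.mem_sdiff.mp hi).1
        simpa [hT] using this
      exact hsort i ⟨t, htn⟩ (by simp [Fin.le_def]; omega)
    have hcard : (F \ T).card ≤ (T \ F).card := by
      have h1 := Finset.card_sdiff_add_card_inter F T
      have h2 := Finset.card_sdiff_add_card_inter T F
      have h3 : F ∩ T = T ∩ F := Finset.inter_comm F T
      rw [h3] at h1
      omega
    have hsum1 : ∑ i ∈ F \ T, w i ≤ (F \ T).card • c :=
      Finset.sum_le_card_nsmul _ _ _ h1
    have hsum2 : (T \ F).card • c ≤ ∑ i ∈ T \ F, w i :=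
      Finset.card_nsmul_le_sum _ _ _ h2
    have hc0 : 0 ≤ c := hnn _
    have hmid : ((F \ T).card : ℝ) * c ≤ ((T \ F).card : ℝ) * c := by
      apply mul_le_mul_of_nonneg_right _ hc0
      exact_mod_cast hcard
    have hFT : ∑ i ∈ F, w i ≤ ∑ i ∈ T, w i := by
      have eF : ∑ i ∈ F ∩ T, w i + ∑ i ∈ F \ T, w i = ∑ i ∈ F, w i :=
        Finset.sum_inter_add_sum_sdiff F T w
      have eT : ∑ i ∈ T ∩ F, w i + ∑ i ∈ T \ F, w i = ∑ i ∈ T, w i :=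
        Finset.sum_inter_add_sum_sdiff T F w
      rw [Finset.inter_comm] at eT
      have : ∑ i ∈ F \ T, w i ≤ ∑ i ∈ T \ F, w i := by
        calc ∑ i ∈ F \ T, w i ≤ (F \ T).card • c := hsum1
          _ = ((F \ T).card : ℝ) * c := by simp [nsmul_eq_mul]
          _ ≤ ((T \ F).card : ℝ) * c := hmid
          _ ≤ ∑ i ∈ T \ F, w i := by
              rw [← nsmul_eq_mul]; exact_mod_cast hsum2
      linarith
    have hcompl : ∑ i ∈ Fᶜ, w i + ∑ i ∈ F, w i = ∑ i, w i :=
      Finset.sum_compl_add_sum F w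
    linarith
  · refine ⟨Finset.univ.filter (fun i : Fin n => (i : ℕ) < t + 1),
      card_filter_lt_fin n (t + 1) hn, ?_⟩
    have hcompl := Finset.sum_compl_add_sum
      (Finset.univ.filter (fun i : Fin n => (i : ℕ) < t + 1)) w
    linarith
end
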